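/- Let Ω ⊆ ℝ² be open, g ∈ ℝ, d ∈ ℝ, let Ψ : Ω → ℝ be twice continuously differentiable, P : Ω → ℝ differentiable, and ρ : ℝ → ℝ continuously differentiable. Suppose that at every point (x, y) ∈ Ω: Ψ_y Ψ_{xy} − Ψ_x Ψ_{yy} = −P_x and Ψ_x Ψ_{xy} − Ψ_y Ψ_{xx} = −P_y − g·ρ(−Ψ). Define E : Ω → ℝ by E(x, y) = |∇Ψ(x, y)|²/2 + P(x, y) + g·ρ(−Ψ(x, y))·(y + d). Then Ψ_y E_x − Ψ_x E_y = 0 at every point of Ω, i.e. the energy E is constant along each streamline of Ψ. -/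

import Mathlib

/-! Differentiating `E`, the terms containing `ρ'` cancel in `Ψ_y E_x − Ψ_x E_y`. Eliminating
`P_x` and `P_y + g ρ(−Ψ)` with the two momentum equations leaves `Ψ_x² (Ψ_yx − Ψ_xy)`, which
vanishes by the symmetry of the second derivative of the `C²` function `Ψ`. -/

/-- Partial derivative in the horizontal direction `x`. -/
noncomputable def pd1 (f : ℝ × ℝ → ℝ) (p : ℝ × ℝ) : ℝ := fderiv ℝ f p (1, 0)

/-- Partial derivative in the vertical direction `y`. -/
noncomputable def pd2 (f : ℝ × ℝ → ℝ) (p : ℝ × ℝ) : ℝ := fderiv ℝ f p (0, 1)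

section SecondDerivative

variable {E F : Type*} [NormedAddCommGroup E] [NormedSpace ℝ E]
  [NormedAddCommGroup F] [NormedSpace ℝ F] {f : E → F} {x : E}

theorem ContDiffAt.differentiableAt_fderiv (hf : ContDiffAt ℝ 2 f x) :
    DifferentiableAt ℝ (fderiv ℝ f) x :=
  (hf.fderiv_right (m := 1) le_rfl).differentiableAt one_ne_zero

theorem ContDiffAt.differentiableAt_fderiv_apply (hf : ContDiffAt ℝ 2 f x) (v : E) :
    DifferentiableAt ℝ (fun y => fderiv ℝ f y v) x :=
  hf.differentiableAt_fderiv.clm_apply (differentiableAt_const v)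

theorem ContDiffAt.fderiv_fderiv_apply (hf : ContDiffAt ℝ 2 f x) (v w : E) :
    fderiv ℝ (fun y => fderiv ℝ f y v) x w = fderiv ℝ (fderiv ℝ f) x w v := by
  rw [fderiv_clm_apply hf.differentiableAt_fderiv (differentiableAt_const v)]
  simp

theorem ContDiffAt.fderiv_fderiv_apply_comm (hf : ContDiffAt ℝ 2 f x) (v w : E) :
    fderiv ℝ (fun y => fderiv ℝ f y v) x w = fderiv ℝ (fun y => fderiv ℝ f y w) x v := by
  rw [hf.fderiv_fderiv_apply, hf.fderiv_fderiv_apply,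
    hf.isSymmSndFDerivAt (by simp [minSmoothness_of_isRCLikeNormedField])]

end SecondDerivative

theorem ContDiffAt.pd2_pd1 {f : ℝ × ℝ → ℝ} {p : ℝ × ℝ} (hf : ContDiffAt ℝ 2 f p) :
    pd2 (pd1 f) p = pd1 (pd2 f) p :=
  hf.fderiv_fderiv_apply_comm (1, 0) (0, 1)

noncomputable def bernoulliEnergy (g d : ℝ) (Ψ P : ℝ × ℝ → ℝ) (ρ : ℝ → ℝ) (p : ℝ × ℝ) : ℝ :=
  ((pd1 Ψ p) ^ 2 + (pd2 Ψ p) ^ 2) / 2 + P p + g * ρ (-(Ψ p)) * (p.2 + d)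

section BernoulliEnergy

open ContinuousLinearMap

variable {g d : ℝ} {Ψ P : ℝ × ℝ → ℝ} {ρ : ℝ → ℝ} {p : ℝ × ℝ}

theorem hasFDerivAt_bernoulliEnergy (hΨ : ContDiffAt ℝ 2 Ψ p) (hP : DifferentiableAt ℝ P p)
    (hρ : DifferentiableAt ℝ ρ (-(Ψ p))) :
    HasFDerivAt (bernoulliEnergy g d Ψ P ρ)
      (pd1 Ψ p • fderiv ℝ (pd1 Ψ) p + pd2 Ψ p • fderiv ℝ (pd2 Ψ) p + fderiv ℝ P p
        + (g * ρ (-(Ψ p))) • snd ℝ ℝ ℝ - (g * deriv ρ (-(Ψ p)) * (p.2 + d)) • fderiv ℝ Ψ p) p := by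
  have h1 : HasFDerivAt (pd1 Ψ) (fderiv ℝ (pd1 Ψ) p) p :=
    (hΨ.differentiableAt_fderiv_apply (1, 0)).hasFDerivAt
  have h2 : HasFDerivAt (pd2 Ψ) (fderiv ℝ (pd2 Ψ) p) p :=
    (hΨ.differentiableAt_fderiv_apply (0, 1)).hasFDerivAt
  have hρΨ : HasFDerivAt (fun q => ρ (-(Ψ q))) (deriv ρ (-(Ψ p)) • -fderiv ℝ Ψ p) p :=
    hρ.hasDerivAt.comp_hasFDerivAt p (hΨ.differentiableAt two_ne_zero).hasFDerivAt.neg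
  have H := ((((h1.pow 2).add (h2.pow 2)).mul_const 2⁻¹).add hP.hasFDerivAt).add
    ((hρΨ.const_mul g).mul (hasFDerivAt_snd.add_const d))
  refine (H.congr_of_eventuallyEq (.of_forall fun q => ?_)).congr_fderiv ?_
  · simp [bernoulliEnergy, div_eq_mul_inv]
  · refine ContinuousLinearMap.ext fun v => ?_
    simp only [Nat.add_one_sub_one, pow_one, nsmul_eq_mul, Nat.cast_ofNat, smul_add, smul_neg,
      add_apply, smul_apply, smul_eq_mul, coe_snd', neg_apply, sub_apply]
    ring

theorem pd1_bernoulliEnergy (hΨ : ContDiffAt ℝ 2 Ψ p) (hP : DifferentiableAt ℝ P p)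
    (hρ : DifferentiableAt ℝ ρ (-(Ψ p))) :
    pd1 (bernoulliEnergy g d Ψ P ρ) p = pd1 Ψ p * pd1 (pd1 Ψ) p + pd2 Ψ p * pd1 (pd2 Ψ) p
      + pd1 P p - g * deriv ρ (-(Ψ p)) * (p.2 + d) * pd1 Ψ p := by
  rw [pd1, (hasFDerivAt_bernoulliEnergy hΨ hP hρ).fderiv]
  simp only [pd1, sub_apply, add_apply, smul_apply, smul_eq_mul, coe_snd', mul_zero, add_zero]

theorem pd2_bernoulliEnergy (hΨ : ContDiffAt ℝ 2 Ψ p) (hP : DifferentiableAt ℝ P p)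
    (hρ : DifferentiableAt ℝ ρ (-(Ψ p))) :
    pd2 (bernoulliEnergy g d Ψ P ρ) p = pd1 Ψ p * pd2 (pd1 Ψ) p + pd2 Ψ p * pd2 (pd2 Ψ) p
      + pd2 P p + g * ρ (-(Ψ p)) - g * deriv ρ (-(Ψ p)) * (p.2 + d) * pd2 Ψ p := by
  rw [pd2, (hasFDerivAt_bernoulliEnergy hΨ hP hρ).fderiv]
  simp only [pd2, sub_apply, add_apply, smul_apply, smul_eq_mul, coe_snd', mul_one]

end BernoulliEnergy

/-- Bernoulli's law in stream-function form: if `Ψ` satisfies the stream-function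
form of the momentum equations with density `ρ(−Ψ)`, then the energy
`E = |∇Ψ|²/2 + P + g·ρ(−Ψ)·(y + d)` satisfies `Ψ_y E_x − Ψ_x E_y = 0`,
i.e. `E` is constant along each streamline of `Ψ`. -/
theorem stmt_8 (Ω : Set (ℝ × ℝ)) (hΩ : IsOpen Ω) (g d : ℝ)
    (Ψ : ℝ × ℝ → ℝ) (hΨ : ContDiffOn ℝ 2 Ψ Ω)
    (P : ℝ × ℝ → ℝ) (hP : ∀ p ∈ Ω, DifferentiableAt ℝ P p)
    (ρ : ℝ → ℝ) (hρ : ContDiff ℝ 1 ρ)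
    (heq1 : ∀ p ∈ Ω, pd2 Ψ p * pd2 (pd1 Ψ) p - pd1 Ψ p * pd2 (pd2 Ψ) p = -(pd1 P p))
    (heq2 : ∀ p ∈ Ω, pd1 Ψ p * pd2 (pd1 Ψ) p - pd2 Ψ p * pd1 (pd1 Ψ) p
      = -(pd2 P p) - g * ρ (-(Ψ p)))
    (E : ℝ × ℝ → ℝ)
    (hE : E = fun p => ((pd1 Ψ p) ^ 2 + (pd2 Ψ p) ^ 2) / 2 + P p
      + g * ρ (-(Ψ p)) * (p.2 + d)) :
    ∀ p ∈ Ω, pd2 Ψ p * pd1 E p - pd1 Ψ p * pd2 E p = 0 := by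
  intro p hp
  obtain rfl : E = bernoulliEnergy g d Ψ P ρ := hE
  have hΨp : ContDiffAt ℝ 2 Ψ p := hΨ.contDiffAt (hΩ.mem_nhds hp)
  have hρp : DifferentiableAt ℝ ρ (-(Ψ p)) := hρ.differentiable one_ne_zero _
  rw [pd1_bernoulliEnergy hΨp (hP p hp) hρp, pd2_bernoulliEnergy hΨp (hP p hp) hρp,
    ← hΨp.pd2_pd1]
  linear_combination pd2 Ψ p * heq1 p hp - pd1 Ψ p * heq2 p hp
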